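/- For all integers N ≥ 1 and p ≥ 0, the 2p-th spectral moment of the Gaussian Unitary Ensemble satisfies: (1/√(2π)) · ∫_ℝ x^{2p}·e^{−x²/2} · (Σ_{k=0}^{N−1} He_k(x)²/k!) dx = Σ_{l=0}^{p} (2p)!/(2^l·l!·(p−l)!) · binom(N, p−l+1), where He_k is the probabilists' Hermite polynomial (He_0 = 1, He_1(x) = x, He_{k+1}(x) = x·He_k(x) − k·He_{k−1}(x)) and binom(N,m) := 0 for m > N. -/

import Mathlib

/-!
Write `E` for the standard Gaussian expectation on `ℝ[X]`. Gaussian integration by parts,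
`E[X Q] = E[Q']`, together with `He_{k+1} = X He_k - He_k'` gives `E[Q He_k] = E[Q⁽ᵏ⁾]`.
Taking `Q = He_k X^{2p}`, Leibniz' rule and `He_k⁽ʲ⁾ = k!/(k-j)! He_{k-j}` reduce
`E[X^{2p} He_k²]` to the moments `E[X^{2m}] = (2m)!/(2^m m!)`, which yields
`E[X^{2p} He_k²] = k! ∑_{i ≤ p} (2p)!/(2^{p-i} (p-i)! i!) binom(k, i)`.
Summing over `k < N` with the hockey-stick identity gives the theorem.
-/

open Finset MeasureTheory

/-- The probabilists' Hermite polynomial `He_k`, as a function on `ℝ`: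
`He_0 = 1`, `He_1(x) = x`, `He_{k+2}(x) = x He_{k+1}(x) − (k+1) He_k(x)`. -/
noncomputable def He : ℕ → ℝ → ℝ
  | 0, _ => 1
  | 1, x => x
  | (k + 2), x => x * He (k + 1) x - (k + 1) * He k x

open Polynomial Real

namespace Polynomial

theorem derivative_hermite_succ (n : ℕ) :
    derivative (hermite (n + 1)) = ((n + 1 : ℕ) : ℤ[X]) * hermite n := by
  induction n with
  | zero => simp
  | succ n ih =>
    rw [hermite_succ (n + 1), derivative_sub, derivative_mul, derivative_X, ih,
      derivative_natCast_mul, hermite_succ n]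
    push_cast
    ring

theorem hermite_succ_succ (n : ℕ) :
    hermite (n + 2) = X * hermite (n + 1) - ((n + 1 : ℕ) : ℤ[X]) * hermite n := by
  rw [hermite_succ (n + 1), derivative_hermite_succ]

theorem iterate_derivative_hermite (i n : ℕ) :
    derivative^[i] (hermite n) = (n.descFactorial i : ℤ[X]) * hermite (n - i) := by
  induction i with
  | zero => simp
  | succ i ih =>
    rw [Function.iterate_succ_apply', ih, derivative_natCast_mul, Nat.descFactorial_succ]
    obtain h | ⟨m, hm⟩ : n - i = 0 ∨ ∃ m, n - i = m + 1 := by cases n - i <;> simp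
    · simp [h]
    · rw [hm, derivative_hermite_succ, show n - (i + 1) = m by omega]
      push_cast
      ring

end Polynomial

theorem He_eq_aeval_hermite (k : ℕ) (x : ℝ) : He k x = aeval x (hermite k) := by
  induction k using Nat.strong_induction_on with
  | _ k ih =>
    match k, ih with
    | 0, _ => simp [He]
    | 1, _ => simp [He]
    | k + 2, ih =>
      rw [He, hermite_succ_succ, ih k (by omega), ih (k + 1) (by omega)]
      simp

theorem integrable_eval_mul_exp_neg_sq_div_two (Q : ℝ[X]) :
    Integrable fun x : ℝ => Q.eval x * exp (-x ^ 2 / 2) := by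
  have integrable_pow (n : ℕ) : Integrable fun x : ℝ => x ^ n * exp (-x ^ 2 / 2) := by
    have := integrable_rpow_mul_exp_neg_mul_sq (b := 1 / 2) (by norm_num)
      (s := n) (by linarith [n.cast_nonneg (α := ℝ)])
    convert this using 3 with x
    · rw [Real.rpow_natCast]
    · ring_nf
  simp_rw [eval_eq_sum_range, Finset.sum_mul, mul_assoc]
  exact integrable_finsetSum _ fun i _ => (integrable_pow i).const_mul _

noncomputable def gaussianExpectation : ℝ[X] →ₗ[ℝ] ℝ where
  toFun Q := (√(2 * π))⁻¹ * ∫ x, Q.eval x * exp (-x ^ 2 / 2)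
  map_add' P Q := by
    rw [← mul_add, ← integral_add (integrable_eval_mul_exp_neg_sq_div_two P)
      (integrable_eval_mul_exp_neg_sq_div_two Q)]
    simp only [eval_add, add_mul]
  map_smul' c Q := by
    simp only [eval_smul, smul_eq_mul, mul_assoc, integral_const_mul, RingHom.id_apply]
    ring

theorem gaussianExpectation_apply (Q : ℝ[X]) :
    gaussianExpectation Q = (√(2 * π))⁻¹ * ∫ x, Q.eval x * exp (-x ^ 2 / 2) :=
  rfl

theorem gaussianExpectation_one : gaussianExpectation 1 = 1 := by
  have h : ∫ x : ℝ, exp (-x ^ 2 / 2) = √(2 * π) := by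
    convert integral_gaussian (1 / 2) using 3 with x
    · ring_nf
    · ring_nf
  rw [gaussianExpectation_apply]
  simp only [eval_one, one_mul]
  rw [h, inv_mul_cancel₀]
  positivity

theorem gaussianExpectation_X_mul (Q : ℝ[X]) :
    gaussianExpectation (X * Q) = gaussianExpectation (derivative Q) := by
  have hderiv (x : ℝ) : HasDerivAt (fun y => Q.eval y * exp (-y ^ 2 / 2))
      ((derivative Q - X * Q).eval x * exp (-x ^ 2 / 2)) x := by
    have hexp : HasDerivAt (fun y : ℝ => exp (-y ^ 2 / 2)) (exp (-x ^ 2 / 2) * -x) x := by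
      convert ((hasDerivAt_pow 2 x).const_mul (-1 / 2 : ℝ)).exp using 1
      · funext y; ring_nf
      · push_cast; ring_nf
    refine ((Q.hasDerivAt x).mul hexp).congr_deriv ?_
    simp only [eval_sub, eval_mul, eval_X]
    ring
  have := integral_eq_zero_of_hasDerivAt_of_integrable hderiv
    (integrable_eval_mul_exp_neg_sq_div_two _) (integrable_eval_mul_exp_neg_sq_div_two Q)
  symm
  rw [← sub_eq_zero, ← map_sub, gaussianExpectation_apply, this, mul_zero]

theorem gaussianExpectation_X_pow_two_mul (q : ℕ) :
    gaussianExpectation (X ^ (2 * q)) = (2 * q).factorial / (2 ^ q * q.factorial) := by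
  induction q with
  | zero => simp [gaussianExpectation_one]
  | succ q ih =>
    rw [show 2 * (q + 1) = 2 * q + 1 + 1 by ring, pow_succ', gaussianExpectation_X_mul,
      derivative_X_pow, ← smul_eq_C_mul, map_smul, Nat.add_sub_cancel, ih, smul_eq_mul,
      Nat.factorial_succ, Nat.factorial_succ, Nat.factorial_succ]
    push_cast
    field_simp
    ring

theorem gaussianExpectation_mul_hermite (Q : ℝ[X]) (k : ℕ) :
    gaussianExpectation (Q * (hermite k).map (Int.castRingHom ℝ)) =
      gaussianExpectation (derivative^[k] Q) := by
  induction k generalizing Q with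
  | zero => simp
  | succ k ih =>
    rw [hermite_succ, Polynomial.map_sub, Polynomial.map_mul, map_X, ← derivative_map,
      show ∀ H : ℝ[X], Q * (X * H - derivative H) = X * (Q * H) - Q * derivative H by
        intro H; ring,
      map_sub, gaussianExpectation_X_mul, derivative_mul, map_add, add_sub_cancel_right, ih,
      Function.iterate_succ_apply]

theorem gaussianExpectation_iterate_derivative_X_pow {i p : ℕ} (h : i ≤ p) :
    gaussianExpectation (derivative^[2 * i] (X ^ (2 * p))) =
      (2 * p).factorial / (2 ^ (p - i) * (p - i).factorial) := by
  rw [iterate_derivative_X_pow_eq_smul, map_smul, smul_eq_mul,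
    ← Nat.factorial_mul_descFactorial (by omega : 2 * i ≤ 2 * p),
    show 2 * p - 2 * i = 2 * (p - i) by omega, gaussianExpectation_X_pow_two_mul]
  push_cast
  field_simp

theorem gaussianExpectation_X_pow_mul_hermite_sq_eq_sum (n k : ℕ) :
    gaussianExpectation (X ^ n * ((hermite k).map (Int.castRingHom ℝ)) ^ 2) =
      ∑ i ∈ range (k + 1), (k.choose i * k.descFactorial (k - i) : ℝ) *
        gaussianExpectation (derivative^[2 * i] (X ^ n)) := by
  rw [show X ^ n * ((hermite k).map (Int.castRingHom ℝ)) ^ 2 =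
      (hermite k).map (Int.castRingHom ℝ) * X ^ n * (hermite k).map (Int.castRingHom ℝ) by ring,
    gaussianExpectation_mul_hermite, iterate_derivative_mul, map_sum]
  refine sum_congr rfl fun i hi => ?_
  rw [map_nsmul, iterate_derivative_map, iterate_derivative_hermite,
    show k - (k - i) = i by have := mem_range.1 hi; omega, Polynomial.map_mul,
    Polynomial.map_natCast, mul_comm, ← nsmul_eq_mul, mul_smul_comm, map_nsmul,
    gaussianExpectation_mul_hermite, ← Function.iterate_add_apply, ← two_mul]
  simp only [nsmul_eq_mul]
  ring

theorem gaussianExpectation_X_pow_mul_hermite_sq (p k : ℕ) :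
    gaussianExpectation (X ^ (2 * p) * ((hermite k).map (Int.castRingHom ℝ)) ^ 2) =
      k.factorial * ∑ i ∈ range (p + 1), ((2 * p).factorial : ℝ) /
        (2 ^ (p - i) * (p - i).factorial * i.factorial) * k.choose i := by
  have moment_vanish {i : ℕ} (hi : p < i) :
      gaussianExpectation (derivative^[2 * i] (X ^ (2 * p))) = 0 := by
    rw [iterate_derivative_eq_zero (by rw [natDegree_X_pow]; omega), map_zero]
  have range_min_subset {n : ℕ} (h : min k p ≤ n) : range (min k p + 1) ⊆ range (n + 1) :=
    range_subset_range.2 (by omega)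
  rw [gaussianExpectation_X_pow_mul_hermite_sq_eq_sum, mul_sum]
  calc _ = ∑ i ∈ range (min k p + 1), (k.choose i * k.descFactorial (k - i) : ℝ) *
        gaussianExpectation (derivative^[2 * i] (X ^ (2 * p))) := by
        refine (sum_subset (range_min_subset (min_le_left k p)) fun i hik hi => ?_).symm
        rw [moment_vanish (by simp at hik hi; omega), mul_zero]
    _ = ∑ i ∈ range (min k p + 1), (k.factorial : ℝ) *
        ((2 * p).factorial / (2 ^ (p - i) * (p - i).factorial * i.factorial) * k.choose i) := by
        refine sum_congr rfl fun i hi => ?_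
        have hik : i ≤ k := by simp at hi; omega
        have hip : i ≤ p := by simp at hi; omega
        have hfact : (i.factorial * k.descFactorial (k - i) : ℝ) = k.factorial := by
          have := Nat.factorial_mul_descFactorial (Nat.sub_le k i)
          rw [Nat.sub_sub_self hik] at this
          exact_mod_cast this
        rw [gaussianExpectation_iterate_derivative_X_pow hip, ← hfact]
        field_simp
    _ = _ := by
        refine sum_subset (range_min_subset (min_le_right k p)) fun i hip hi => ?_
        rw [Nat.choose_eq_zero_of_lt (by simp at hip hi; omega), Nat.cast_zero, mul_zero,
          mul_zero]

theorem Nat.sum_range_choose_eq_choose_succ (n k : ℕ) :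
    ∑ m ∈ range n, m.choose k = n.choose (k + 1) := by
  induction n with
  | zero => simp
  | succ n ih => rw [sum_range_succ, ih, Nat.choose_succ_succ', add_comm]

theorem gue_spectral_moments_general (N p : ℕ) :
    (Real.sqrt (2 * Real.pi))⁻¹ *
        ∫ x : ℝ, x ^ (2 * p) * Real.exp (-x ^ 2 / 2) *
          (∑ k ∈ Finset.range N, (He k x) ^ 2 / (k.factorial : ℝ))
      = ∑ l ∈ Finset.range (p + 1),
          ((2 * p).factorial : ℝ) / ((2 : ℝ) ^ l * (l.factorial : ℝ) * ((p - l).factorial : ℝ)) *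
            (N.choose (p - l + 1) : ℝ) := by
  have integrand (x : ℝ) : x ^ (2 * p) * exp (-x ^ 2 / 2) *
      (∑ k ∈ range N, (He k x) ^ 2 / (k.factorial : ℝ)) =
      (∑ k ∈ range N, (k.factorial : ℝ)⁻¹ •
        (X ^ (2 * p) * ((hermite k).map (Int.castRingHom ℝ)) ^ 2)).eval x * exp (-x ^ 2 / 2) := by
    simp only [eval_finsetSum, eval_smul, eval_mul, eval_pow, eval_X, eval_map, He_eq_aeval_hermite,
      aeval_def, algebraMap_int_eq, smul_eq_mul, mul_sum, sum_mul]
    refine sum_congr rfl fun k _ => ?_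
    ring
  simp_rw [integrand, ← gaussianExpectation_apply, map_sum, map_smul,
    gaussianExpectation_X_pow_mul_hermite_sq, smul_eq_mul]
  simp only [ne_eq, Nat.cast_eq_zero, Nat.factorial_ne_zero, not_false_eq_true,
    inv_mul_cancel_left₀]
  rw [sum_comm, ← sum_range_reflect]
  refine sum_congr rfl fun l hl => ?_
  rw [← mul_sum, ← Nat.cast_sum, Nat.sum_range_choose_eq_choose_succ,
    show p - (p + 1 - 1 - l) = l by simp at hl; omega, show p + 1 - 1 - l = p - l by omega]

/-- Spectral moments of the Gaussian Unitary Ensemble: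
`(1/√(2π)) ∫_ℝ x^{2p} e^{−x²/2} (∑_{k<N} He_k(x)²/k!) dx
 = ∑_{l=0}^{p} (2p)!/(2^l l! (p−l)!) binom(N, p−l+1)`. -/
theorem gue_spectral_moments (N p : ℕ) (hN : 1 ≤ N) :
    (Real.sqrt (2 * Real.pi))⁻¹ *
        ∫ x : ℝ, x ^ (2 * p) * Real.exp (-x ^ 2 / 2) *
          (∑ k ∈ Finset.range N, (He k x) ^ 2 / (k.factorial : ℝ))
      = ∑ l ∈ Finset.range (p + 1),
          ((2 * p).factorial : ℝ) / ((2 : ℝ) ^ l * (l.factorial : ℝ) * ((p - l).factorial : ℝ)) *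
            (N.choose (p - l + 1) : ℝ) :=
  gue_spectral_moments_general N p
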